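/- arXiv:1906.02930 — 5 statements merged into one kernel-verified Lean document; each statement's English description precedes it below -/
import Mathlib

section
/- Let (Ω, 𝓕, ℙ) be a probability space, T, q ∈ ℕ, and Y, Ŷ : Ω → (Fin (T+1) → EuclideanSpace ℝ (Fin q)) be measurable random trajectories. Let ε ≥ 0 and γ ∈ [0,1] be such that ℙ{ω | ∀ k, ‖Y ω k − Ŷ ω k‖ ≤ ε} ≥ 1 − γ. Then for every set A ⊆ (Fin (T+1) → EuclideanSpace ℝ (Fin q)) such that A and its ε-expansion A^ε are measurable, one has ℙ{ω | Y ω ∈ A} ≤ ℙ{ω | Ŷ ω ∈ A^ε} + γ. -/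
open MeasureTheory
open scoped ENNReal

/-- The `ε`-expansion `A^ε` of a set of output trajectories. -/
def epsExpansion {T q : ℕ} (A : Set (Fin (T + 1) → EuclideanSpace ℝ (Fin q)))
    (ε : ℝ) : Set (Fin (T + 1) → EuclideanSpace ℝ (Fin q)) :=
  {y | ∃ ybar ∈ A, ∀ k, ‖ybar k - y k‖ ≤ ε}

/-- Upper bound of Theorem 3.4 (closeness), in coupling form: if the two output
trajectories stay `ε`-close with probability at least `1 - γ`, then for every
measurable event `A` with measurable `ε`-expansion,
`ℙ{Y ∈ A} ≤ ℙ{Ŷ ∈ A^ε} + γ`. -/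
theorem closeness_upper_bound {Ω : Type*} [MeasurableSpace Ω]
    (ℙ : Measure Ω) [IsProbabilityMeasure ℙ] {T q : ℕ}
    (Y Yhat : Ω → (Fin (T + 1) → EuclideanSpace ℝ (Fin q)))
    (hY : Measurable Y) (hYhat : Measurable Yhat)
    (ε γ : ℝ) (hε : 0 ≤ ε) (hγ0 : 0 ≤ γ) (hγ1 : γ ≤ 1)
    (hclose : ENNReal.ofReal (1 - γ) ≤ ℙ {ω | ∀ k, ‖Y ω k - Yhat ω k‖ ≤ ε})
    (A : Set (Fin (T + 1) → EuclideanSpace ℝ (Fin q)))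
    (hA : MeasurableSet A) (hAe : MeasurableSet (epsExpansion A ε)) :
    (ℙ {ω | Y ω ∈ A}).toReal ≤ (ℙ {ω | Yhat ω ∈ epsExpansion A ε}).toReal + γ := by
  set E : Set Ω := {ω | ∀ k, ‖Y ω k - Yhat ω k‖ ≤ ε} with hE
  have hEmeas : MeasurableSet E := by
    have : E = ⋂ k, {ω | ‖Y ω k - Yhat ω k‖ ≤ ε} := by
      ext ω; simp [hE]
    rw [this]
    apply MeasurableSet.iInter
    intro k
    have : Measurable fun ω => ‖Y ω k - Yhat ω k‖ :=
      ((hY.eval (a := k)).sub (hYhat.eval (a := k))).norm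
    exact measurableSet_le this measurable_const
  have hsub : {ω | Y ω ∈ A} ⊆ {ω | Yhat ω ∈ epsExpansion A ε} ∪ Eᶜ := by
    intro ω hω
    by_cases h : ω ∈ E
    · left
      exact ⟨Y ω, hω, h⟩
    · right; exact h
  have hEc : ℙ Eᶜ ≤ ENNReal.ofReal γ := by
    have hcompl : ℙ Eᶜ = ℙ Set.univ - ℙ E := measure_compl hEmeas (measure_ne_top ℙ E)
    rw [hcompl, measure_univ]
    refine tsub_le_iff_right.mpr ?_
    calc (1 : ℝ≥0∞) = ENNReal.ofReal (1 - γ) + ENNReal.ofReal γ := by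
          rw [← ENNReal.ofReal_add (by linarith) hγ0]
          simp
      _ ≤ ENNReal.ofReal γ + ℙ E := by rw [add_comm]; exact add_le_add le_rfl hclose
  have h1 : ℙ {ω | Y ω ∈ A} ≤ ℙ {ω | Yhat ω ∈ epsExpansion A ε} + ENNReal.ofReal γ :=
    le_trans (measure_mono hsub) (le_trans (measure_union_le _ _) (add_le_add le_rfl hEc))
  have h2 := ENNReal.toReal_mono (by finiteness) h1
  rw [ENNReal.toReal_add (measure_ne_top _ _) ENNReal.ofReal_ne_top,
    ENNReal.toReal_ofReal hγ0] at h2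
  exact h2
end

section
/- Let n, n̂, q ∈ ℕ, let C be a real q × n matrix, M a real n × n matrix, and P a real n × n̂ matrix, and suppose M − Cᵀ * C is positive semidefinite. Let ε ≥ 0. Then for all x ∈ ℝⁿ and x̂ ∈ ℝ^n̂ with (x − P.mulVec x̂) ⬝ᵥ M.mulVec (x − P.mulVec x̂) ≤ ε², the Euclidean norm satisfies ‖C.mulVec x − (C * P).mulVec x̂‖ ≤ ε. -/
open Matrix

/-- First part of the proof of Theorem 5.4: under `M ⪰ CᵀC` and `Ĉ = CP`, states in
the quadratic relation `R_x` have outputs at Euclidean distance at most `ε`. -/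
theorem output_closeness_of_relation {n nhat q : ℕ}
    (C : Matrix (Fin q) (Fin n) ℝ) (M : Matrix (Fin n) (Fin n) ℝ)
    (P : Matrix (Fin n) (Fin nhat) ℝ)
    (hM : (M - Cᵀ * C).PosSemidef)
    (ε : ℝ) (hε : 0 ≤ ε)
    (x : Fin n → ℝ) (xhat : Fin nhat → ℝ)
    (hrel : (x - P.mulVec xhat) ⬝ᵥ M.mulVec (x - P.mulVec xhat) ≤ ε ^ 2) :
    ‖(WithLp.equiv 2 (Fin q → ℝ)).symm (C.mulVec x - (C * P).mulVec xhat)‖ ≤ ε := by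
  set v := x - P.mulVec xhat with hv
  have hvec : C.mulVec x - (C * P).mulVec xhat = C.mulVec v := by
    simp [hv, Matrix.mulVec_sub, Matrix.mulVec_mulVec]
  have hkey : 0 ≤ v ⬝ᵥ (M - Cᵀ * C).mulVec v := hM.dotProduct_mulVec_nonneg v
  have hquad : (C.mulVec v) ⬝ᵥ (C.mulVec v) ≤ ε ^ 2 := by
    have h1 : v ⬝ᵥ (Cᵀ * C).mulVec v = (C.mulVec v) ⬝ᵥ (C.mulVec v) := by
      rw [← Matrix.mulVec_mulVec, Matrix.dotProduct_mulVec, Matrix.vecMul_transpose]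
    have h2 : v ⬝ᵥ (M - Cᵀ * C).mulVec v
        = v ⬝ᵥ M.mulVec v - v ⬝ᵥ (Cᵀ * C).mulVec v := by
      rw [Matrix.sub_mulVec, dotProduct_sub]
    rw [← h1]
    nlinarith [hrel, hkey, h2]
  rw [hvec]
  have hnorm : ‖(WithLp.equiv 2 (Fin q → ℝ)).symm (C.mulVec v)‖
      = Real.sqrt ((C.mulVec v) ⬝ᵥ (C.mulVec v)) := by
    rw [EuclideanSpace.norm_eq]
    congr 1
    simp [dotProduct, sq, WithLp.equiv_symm_apply, sq_abs]
  rw [hnorm]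
  calc Real.sqrt ((C.mulVec v) ⬝ᵥ (C.mulVec v)) ≤ Real.sqrt (ε ^ 2) :=
        Real.sqrt_le_sqrt hquad
    _ = ε := by rw [Real.sqrt_sq hε]
end

section
/- Let n, n̂, m, m̂, p, p̂, r ∈ ℕ and let A : Matrix (Fin n) (Fin n) ℝ, B : Matrix (Fin n) (Fin m) ℝ, D : Matrix (Fin n) (Fin p) ℝ, R : Matrix (Fin n) (Fin r) ℝ, P : Matrix (Fin n) (Fin n̂) ℝ, P_w : Matrix (Fin p) (Fin p̂) ℝ, K : Matrix (Fin m) (Fin n) ℝ, Q : Matrix (Fin m) (Fin n̂) ℝ, S : Matrix (Fin m) (Fin p̂) ℝ, R̃ : Matrix (Fin m) (Fin m̂) ℝ, Â : Matrix (Fin n̂) (Fin n̂) ℝ, B̂ : Matrix (Fin n̂) (Fin m̂) ℝ, D̂ : Matrix (Fin n̂) (Fin p̂) ℝ, R̂ : Matrix (Fin n̂) (Fin r) ℝ; let e, f ∈ ℝⁿ, l₁, l₂ ∈ ℝ^m, ê, f̂ ∈ ℝ^n̂; let φ : ℝ → ℝ be any function and Π : ℝ^n̂ → ℝ^n̂ any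 map. Assume: (i) f̂ ⬝ᵥ x̂ = f ⬝ᵥ P.mulVec x̂ for all x̂ ∈ ℝ^n̂; (ii) e = P.mulVec ê − B.mulVec (l₁ − l₂); (iii) A * P = P * Â − B * Q; (iv) D * P_w = P * D̂ − B * S. For x ∈ ℝⁿ, x̂ ∈ ℝ^n̂, w ∈ ℝ^p, ŵ ∈ ℝ^p̂, ν̂ ∈ ℝ^m̂, ς ∈ ℝ^r, define the interface ν := K.mulVec (x − P.mulVec x̂) + Q.mulVec x̂ + R̃.mulVec ν̂ + S.mulVec ŵ + φ(f ⬝ᵥ x) • l₁ − φ(f ⬝ᵥ P.mulVec x̂) • l₂, the concrete successor x' := A.mulVec x + φ(f ⬝ᵥ x) • e + D.mulVec w + B.mulVec ν + R.mulVec ς, the pre-quantization abstract successor z := Â.mulVec x̂ + φ(f̂ ⬝ᵥ x̂) • ê + D̂.mulVec ŵ + B̂.mulVec ν̂ + R̂.mulVec ς, the quantized abstract successor x̂' := Π z, and the quantization error G := z − Π z. Then x' − P.mulVec x̂' = (A + B * K).mulVec (x − P.mulVec x̂) + D.mulVec (w − P_w.mulVec ŵ) + (B * R̃ − P * B̂).mulVec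 ν̂ + (φ(f ⬝ᵥ x) − φ(f ⬝ᵥ P.mulVec x̂)) • (B.mulVec l₁ + e) + (R − P * R̂).mulVec ς + P.mulVec G. -/
open Matrix

/-- The central error-dynamics identity (equation (12)) in the proof of Theorem 5.4. -/
theorem error_dynamics_identity
    {n nhat m mhat p phat r : ℕ}
    (A : Matrix (Fin n) (Fin n) ℝ) (B : Matrix (Fin n) (Fin m) ℝ)
    (D : Matrix (Fin n) (Fin p) ℝ) (R : Matrix (Fin n) (Fin r) ℝ)
    (P : Matrix (Fin n) (Fin nhat) ℝ) (Pw : Matrix (Fin p) (Fin phat) ℝ)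
    (K : Matrix (Fin m) (Fin n) ℝ) (Q : Matrix (Fin m) (Fin nhat) ℝ)
    (S : Matrix (Fin m) (Fin phat) ℝ) (Rt : Matrix (Fin m) (Fin mhat) ℝ)
    (Ah : Matrix (Fin nhat) (Fin nhat) ℝ) (Bh : Matrix (Fin nhat) (Fin mhat) ℝ)
    (Dh : Matrix (Fin nhat) (Fin phat) ℝ) (Rh : Matrix (Fin nhat) (Fin r) ℝ)
    (e : Fin n → ℝ) (f : Fin n → ℝ) (l₁ l₂ : Fin m → ℝ)
    (eh : Fin nhat → ℝ) (fh : Fin nhat → ℝ)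
    (φ : ℝ → ℝ) (quant : (Fin nhat → ℝ) → (Fin nhat → ℝ))
    -- structural matching conditions (8c)-(8f)
    (hF : ∀ xhat : Fin nhat → ℝ, fh ⬝ᵥ xhat = f ⬝ᵥ P.mulVec xhat)
    (hE : e = P.mulVec eh - B.mulVec (l₁ - l₂))
    (hA : A * P = P * Ah - B * Q)
    (hD : D * Pw = P * Dh - B * S)
    -- states, inputs and noise
    (x : Fin n → ℝ) (xhat : Fin nhat → ℝ) (w : Fin p → ℝ) (what : Fin phat → ℝ)
    (νhat : Fin mhat → ℝ) (ς : Fin r → ℝ)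
    -- the interface function (equation (14))
    (ν : Fin m → ℝ)
    (hν : ν = K.mulVec (x - P.mulVec xhat) + Q.mulVec xhat + Rt.mulVec νhat +
      S.mulVec what + φ (f ⬝ᵥ x) • l₁ - φ (f ⬝ᵥ P.mulVec xhat) • l₂)
    -- concrete successor state
    (x' : Fin n → ℝ)
    (hx' : x' = A.mulVec x + φ (f ⬝ᵥ x) • e + D.mulVec w + B.mulVec ν + R.mulVec ς)
    -- pre-quantization abstract successor, quantized successor, quantization error
    (z : Fin nhat → ℝ)
    (hz : z = Ah.mulVec xhat + φ (fh ⬝ᵥ xhat) • eh + Dh.mulVec what +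
      Bh.mulVec νhat + Rh.mulVec ς)
    (xhat' : Fin nhat → ℝ) (hxhat' : xhat' = quant z)
    (G : Fin nhat → ℝ) (hG : G = z - quant z) :
    x' - P.mulVec xhat' =
      (A + B * K).mulVec (x - P.mulVec xhat)
        + D.mulVec (w - Pw.mulVec what)
        + (B * Rt - P * Bh).mulVec νhat
        + (φ (f ⬝ᵥ x) - φ (f ⬝ᵥ P.mulVec xhat)) • (B.mulVec l₁ + e)
        + (R - P * Rh).mulVec ς
        + P.mulVec G := by
  subst hν hx' hz hxhat' hG
  have hAP : A.mulVec (P.mulVec xhat)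
      = P.mulVec (Ah.mulVec xhat) - B.mulVec (Q.mulVec xhat) := by
    rw [mulVec_mulVec, hA, sub_mulVec, mulVec_mulVec, mulVec_mulVec]
  have hDP : D.mulVec (Pw.mulVec what)
      = P.mulVec (Dh.mulVec what) - B.mulVec (S.mulVec what) := by
    rw [mulVec_mulVec, hD, sub_mulVec, mulVec_mulVec, mulVec_mulVec]
  simp only [hF, hE, add_mul, mulVec_add, mulVec_sub, mulVec_smul, add_mulVec,
    sub_mulVec, ← mulVec_mulVec]
  rw [hAP, hDP]
  module
end

section
/- In the setting of the error-dynamics identity of Theorem 5.4, additionally let q ∈ ℕ, C : Matrix (Fin q) (Fin n) ℝ, M : Matrix (Fin n) (Fin n) ℝ, M_w : Matrix (Fin p) (Fin p) ℝ, ε, ε_w ≥ 0, δ ∈ [0,1], b > 0, and let μ_ς be a probability measure on ℝ^r (in the paper, the standard Gaussian; the argument needs only that μ_ς is a probability measure and the relevant events are measurable). Define the relations R_x := {(x, x̂) | (x − P.mulVec x̂) ⬝ᵥ M.mulVec (x − P.mulVec x̂) ≤ ε²} and R_w := {(w, ŵ) | (w − P_w.mulVec ŵ) ⬝ᵥ M_w.mulVec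 (w − P_w.mulVec ŵ) ≤ ε_w²}. Assume: (a) M − Cᵀ * C is positive semidefinite; (b) the structural conditions (i)–(iv) of the error-dynamics identity hold; (c) φ satisfies the incremental sector condition 0 ≤ (φ c − φ d)/(c − d) ≤ b for all c ≠ d; (d) for all (x, x̂) ∈ R_x, all (w, ŵ) ∈ R_w, all ν̂ ∈ ℝ^m̂, and all δ̄ ∈ [0, b], the chance constraint μ_ς {ς | (H ς + P.mulVec (G ς)) ⬝ᵥ M.mulVec (H ς + P.mulVec (G ς)) ≤ ε²} ≥ 1 − δ holds, where H ς := (A + B * K).mulVec (x − P.mulVec x̂) + δ̄ * (f ⬝ᵥ (x − P.mulVec x̂)) • (B.mulVec l₁ + e) + D.mulVec (w − P_w.mulVec ŵ) + (B * R̃ − P * B̂).mulVec ν̂ + (R − P * R̂).mulVec ς and G ς := z ς − Π (z ς) with z ς := Â.mulVec x̂ + φ(f̂ ⬝ᵥ x̂) • ê + D̂.mulVec ŵ + B̂.mulVec ν̂ + R̂.mulVec ς. Then for all (x, x̂) ∈ R_x, (w, ŵ) ∈ R_w, and ν̂ ∈ ℝ^m̂: (1) ‖C.mulVec x − (C * P).mulVec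 x̂‖ ≤ ε; and (2) taking ν as the interface function of the error-dynamics identity and x' ς, x̂' ς the resulting successor states under shared noise ς, one has μ_ς {ς | (x' ς, x̂' ς) ∈ R_x} ≥ 1 − δ. -/
open Matrix MeasureTheory
open scoped ENNReal


lemma key_identity {n nhat m mhat p phat r : ℕ}
    (A : Matrix (Fin n) (Fin n) ℝ) (B : Matrix (Fin n) (Fin m) ℝ)
    (D : Matrix (Fin n) (Fin p) ℝ) (R : Matrix (Fin n) (Fin r) ℝ)
    (P : Matrix (Fin n) (Fin nhat) ℝ) (Pw : Matrix (Fin p) (Fin phat) ℝ)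
    (K : Matrix (Fin m) (Fin n) ℝ) (Q : Matrix (Fin m) (Fin nhat) ℝ)
    (S : Matrix (Fin m) (Fin phat) ℝ) (Rt : Matrix (Fin m) (Fin mhat) ℝ)
    (Ah : Matrix (Fin nhat) (Fin nhat) ℝ) (Bh : Matrix (Fin nhat) (Fin mhat) ℝ)
    (Dh : Matrix (Fin nhat) (Fin phat) ℝ) (Rh : Matrix (Fin nhat) (Fin r) ℝ)
    (e : Fin n → ℝ) (l₁ l₂ : Fin m → ℝ) (eh : Fin nhat → ℝ)
    (c d : ℝ)
    (hE : e = P.mulVec eh - B.mulVec (l₁ - l₂))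
    (hA : A * P = P * Ah - B * Q)
    (hD : D * Pw = P * Dh - B * S)
    (x : Fin n → ℝ) (xhat : Fin nhat → ℝ) (w : Fin p → ℝ)
    (what : Fin phat → ℝ) (νhat : Fin mhat → ℝ) (ς : Fin r → ℝ) :
    A.mulVec x + c • e + D.mulVec w +
      B.mulVec (K.mulVec (x - P.mulVec xhat) + Q.mulVec xhat + Rt.mulVec νhat +
        S.mulVec what + c • l₁ - d • l₂) + R.mulVec ς
    - P.mulVec (Ah.mulVec xhat + d • eh + Dh.mulVec what + Bh.mulVec νhat + Rh.mulVec ς)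
    = (A + B * K).mulVec (x - P.mulVec xhat) + (c - d) • (B.mulVec l₁ + e) +
      D.mulVec (w - Pw.mulVec what) + (B * Rt - P * Bh).mulVec νhat +
      (R - P * Rh).mulVec ς := by
  have hA' : P.mulVec (Ah.mulVec xhat)
      = A.mulVec (P.mulVec xhat) + B.mulVec (Q.mulVec xhat) := by
    have := congrArg (fun M => Matrix.mulVec M xhat) hA
    simp only [Matrix.sub_mulVec, ← Matrix.mulVec_mulVec] at this
    rw [this]; abel
  have hD' : P.mulVec (Dh.mulVec what)
      = D.mulVec (Pw.mulVec what) + B.mulVec (S.mulVec what) := by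
    have := congrArg (fun M => Matrix.mulVec M what) hD
    simp only [Matrix.sub_mulVec, ← Matrix.mulVec_mulVec] at this
    rw [this]; abel
  have hE' : P.mulVec eh = e + (B.mulVec l₁ - B.mulVec l₂) := by
    rw [hE, Matrix.mulVec_sub]; abel
  simp only [Matrix.add_mulVec, Matrix.sub_mulVec, Matrix.mulVec_add, Matrix.mulVec_sub,
    Matrix.mulVec_smul, ← Matrix.mulVec_mulVec, hA', hD', hE']
  module


/-- Auxiliary step for part (2): given any `δbar ∈ [0, b]` realizing the secant slope of
`φ` between `f ⬝ᵥ x` and `f ⬝ᵥ P *ᵥ x̂`, the chance constraint transfers to the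
successor-state event. -/
lemma main_aux {n nhat m mhat p phat r : ℕ}
    (A : Matrix (Fin n) (Fin n) ℝ) (B : Matrix (Fin n) (Fin m) ℝ)
    (D : Matrix (Fin n) (Fin p) ℝ) (R : Matrix (Fin n) (Fin r) ℝ)
    (P : Matrix (Fin n) (Fin nhat) ℝ) (Pw : Matrix (Fin p) (Fin phat) ℝ)
    (K : Matrix (Fin m) (Fin n) ℝ) (Q : Matrix (Fin m) (Fin nhat) ℝ)
    (S : Matrix (Fin m) (Fin phat) ℝ) (Rt : Matrix (Fin m) (Fin mhat) ℝ)
    (Ah : Matrix (Fin nhat) (Fin nhat) ℝ) (Bh : Matrix (Fin nhat) (Fin mhat) ℝ)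
    (Dh : Matrix (Fin nhat) (Fin phat) ℝ) (Rh : Matrix (Fin nhat) (Fin r) ℝ)
    (M : Matrix (Fin n) (Fin n) ℝ)
    (e : Fin n → ℝ) (f : Fin n → ℝ) (l₁ l₂ : Fin m → ℝ)
    (eh : Fin nhat → ℝ) (fh : Fin nhat → ℝ)
    (φ : ℝ → ℝ) (quant : (Fin nhat → ℝ) → (Fin nhat → ℝ))
    (ε δ b : ℝ)
    (μς : MeasureTheory.Measure (Fin r → ℝ))
    (Rx : Set ((Fin n → ℝ) × (Fin nhat → ℝ)))
    (hRx : Rx = {s | (s.1 - P.mulVec s.2) ⬝ᵥ M.mulVec (s.1 - P.mulVec s.2) ≤ ε ^ 2})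
    (hF : ∀ xhat : Fin nhat → ℝ, fh ⬝ᵥ xhat = f ⬝ᵥ P.mulVec xhat)
    (hE : e = P.mulVec eh - B.mulVec (l₁ - l₂))
    (hA : A * P = P * Ah - B * Q)
    (hD : D * Pw = P * Dh - B * S)
    (Rw : Set ((Fin p → ℝ) × (Fin phat → ℝ)))
    (hchance : ∀ (x : Fin n → ℝ) (xhat : Fin nhat → ℝ) (w : Fin p → ℝ)
      (what : Fin phat → ℝ) (νhat : Fin mhat → ℝ) (δbar : ℝ),
      (x, xhat) ∈ Rx → (w, what) ∈ Rw →
      δbar ∈ Set.Icc (0 : ℝ) b →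
      ENNReal.ofReal (1 - δ) ≤ μς {ς |
        let z := Ah.mulVec xhat + φ (fh ⬝ᵥ xhat) • eh + Dh.mulVec what +
          Bh.mulVec νhat + Rh.mulVec ς
        let H := (A + B * K).mulVec (x - P.mulVec xhat) +
          (δbar * (f ⬝ᵥ (x - P.mulVec xhat))) • (B.mulVec l₁ + e) +
          D.mulVec (w - Pw.mulVec what) + (B * Rt - P * Bh).mulVec νhat +
          (R - P * Rh).mulVec ς
        (H + P.mulVec (z - quant z)) ⬝ᵥ M.mulVec (H + P.mulVec (z - quant z)) ≤ ε ^ 2})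
    (x : Fin n → ℝ) (xhat : Fin nhat → ℝ) (w : Fin p → ℝ)
    (what : Fin phat → ℝ) (νhat : Fin mhat → ℝ)
    (hx : (x, xhat) ∈ Rx) (hw : (w, what) ∈ Rw)
    (δbar : ℝ) (hmem : δbar ∈ Set.Icc (0 : ℝ) b)
    (hscal : δbar * (f ⬝ᵥ (x - P.mulVec xhat)) = φ (f ⬝ᵥ x) - φ (f ⬝ᵥ P.mulVec xhat)) :
    ENNReal.ofReal (1 - δ) ≤ μς {ς |
      let ν := K.mulVec (x - P.mulVec xhat) + Q.mulVec xhat + Rt.mulVec νhat +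
        S.mulVec what + φ (f ⬝ᵥ x) • l₁ - φ (f ⬝ᵥ P.mulVec xhat) • l₂
      let x' := A.mulVec x + φ (f ⬝ᵥ x) • e + D.mulVec w + B.mulVec ν + R.mulVec ς
      let xhat' := quant (Ah.mulVec xhat + φ (fh ⬝ᵥ xhat) • eh + Dh.mulVec what +
        Bh.mulVec νhat + Rh.mulVec ς)
      (x', xhat') ∈ Rx} := by
  have key := hchance x xhat w what νhat δbar hx hw hmem
  convert key using 2
  ext ς
  simp only [Set.mem_setOf_eq, hRx, hF xhat]
  set zz : Fin nhat → ℝ := Ah.mulVec xhat + φ (f ⬝ᵥ P.mulVec xhat) • eh +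
    Dh.mulVec what + Bh.mulVec νhat + Rh.mulVec ς with hzz
  have h1 := key_identity A B D R P Pw K Q S Rt Ah Bh Dh Rh e l₁ l₂ eh
    (φ (f ⬝ᵥ x)) (φ (f ⬝ᵥ P.mulVec xhat)) hE hA hD x xhat w what νhat ς
  have hid :
      A.mulVec x + φ (f ⬝ᵥ x) • e + D.mulVec w +
        B.mulVec (K.mulVec (x - P.mulVec xhat) + Q.mulVec xhat + Rt.mulVec νhat +
          S.mulVec what + φ (f ⬝ᵥ x) • l₁ - φ (f ⬝ᵥ P.mulVec xhat) • l₂) + R.mulVec ς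
      - P.mulVec (quant zz)
      = ((A + B * K).mulVec (x - P.mulVec xhat) +
          (δbar * (f ⬝ᵥ (x - P.mulVec xhat))) • (B.mulVec l₁ + e) +
          D.mulVec (w - Pw.mulVec what) + (B * Rt - P * Bh).mulVec νhat +
          (R - P * Rh).mulVec ς) + P.mulVec (zz - quant zz) := by
    rw [hscal]
    have h2 : P.mulVec (zz - quant zz) = P.mulVec zz - P.mulVec (quant zz) :=
      Matrix.mulVec_sub P zz (quant zz)
    rw [h2, ← h1, hzz]
    abel
  rw [hid]

/-- Theorem 5.4: under the structural matching conditions, the sector condition on the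
nonlinearity, `M ⪰ CᵀC`, and the chance constraint (8g), the finite gMDP obtained by
quantizing the reduced-order model is (ε, δ)-stochastically simulated by the concrete
nonlinear system, with quadratic relations `R_x`, `R_w` and linear interface. -/
theorem finite_abstraction_simulation
    {n nhat m mhat p phat r q : ℕ}
    (A : Matrix (Fin n) (Fin n) ℝ) (B : Matrix (Fin n) (Fin m) ℝ)
    (C : Matrix (Fin q) (Fin n) ℝ)
    (D : Matrix (Fin n) (Fin p) ℝ) (R : Matrix (Fin n) (Fin r) ℝ)
    (P : Matrix (Fin n) (Fin nhat) ℝ) (Pw : Matrix (Fin p) (Fin phat) ℝ)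
    (K : Matrix (Fin m) (Fin n) ℝ) (Q : Matrix (Fin m) (Fin nhat) ℝ)
    (S : Matrix (Fin m) (Fin phat) ℝ) (Rt : Matrix (Fin m) (Fin mhat) ℝ)
    (Ah : Matrix (Fin nhat) (Fin nhat) ℝ) (Bh : Matrix (Fin nhat) (Fin mhat) ℝ)
    (Dh : Matrix (Fin nhat) (Fin phat) ℝ) (Rh : Matrix (Fin nhat) (Fin r) ℝ)
    (M : Matrix (Fin n) (Fin n) ℝ) (Mw : Matrix (Fin p) (Fin p) ℝ)
    (e : Fin n → ℝ) (f : Fin n → ℝ) (l₁ l₂ : Fin m → ℝ)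
    (eh : Fin nhat → ℝ) (fh : Fin nhat → ℝ)
    (φ : ℝ → ℝ) (quant : (Fin nhat → ℝ) → (Fin nhat → ℝ))
    (ε εw δ b : ℝ) (hε : 0 ≤ ε) (hεw : 0 ≤ εw)
    (hδ0 : 0 ≤ δ) (hδ1 : δ ≤ 1) (hb : 0 < b)
    (μς : Measure (Fin r → ℝ)) [IsProbabilityMeasure μς]
    -- the quadratic relations R_x and R_w
    (Rx : Set ((Fin n → ℝ) × (Fin nhat → ℝ)))
    (hRx : Rx = {s | (s.1 - P.mulVec s.2) ⬝ᵥ M.mulVec (s.1 - P.mulVec s.2) ≤ ε ^ 2})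
    (Rw : Set ((Fin p → ℝ) × (Fin phat → ℝ)))
    (hRw : Rw = {s | (s.1 - Pw.mulVec s.2) ⬝ᵥ Mw.mulVec (s.1 - Pw.mulVec s.2) ≤ εw ^ 2})
    -- (a)  M ⪰ CᵀC
    (hM : (M - Cᵀ * C).PosSemidef)
    -- (b)  structural matching conditions
    (hF : ∀ xhat : Fin nhat → ℝ, fh ⬝ᵥ xhat = f ⬝ᵥ P.mulVec xhat)
    (hE : e = P.mulVec eh - B.mulVec (l₁ - l₂))
    (hA : A * P = P * Ah - B * Q)
    (hD : D * Pw = P * Dh - B * S)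
    -- (c)  incremental sector condition on φ
    (hφ : ∀ c d : ℝ, c ≠ d → 0 ≤ (φ c - φ d) / (c - d) ∧ (φ c - φ d) / (c - d) ≤ b)
    -- (d)  chance constraint
    (hchance : ∀ (x : Fin n → ℝ) (xhat : Fin nhat → ℝ) (w : Fin p → ℝ)
      (what : Fin phat → ℝ) (νhat : Fin mhat → ℝ) (δbar : ℝ),
      (x, xhat) ∈ Rx → (w, what) ∈ Rw → δbar ∈ Set.Icc (0 : ℝ) b →
      ENNReal.ofReal (1 - δ) ≤ μς {ς |
        let z := Ah.mulVec xhat + φ (fh ⬝ᵥ xhat) • eh + Dh.mulVec what +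
          Bh.mulVec νhat + Rh.mulVec ς
        let H := (A + B * K).mulVec (x - P.mulVec xhat) +
          (δbar * (f ⬝ᵥ (x - P.mulVec xhat))) • (B.mulVec l₁ + e) +
          D.mulVec (w - Pw.mulVec what) + (B * Rt - P * Bh).mulVec νhat +
          (R - P * Rh).mulVec ς
        (H + P.mulVec (z - quant z)) ⬝ᵥ M.mulVec (H + P.mulVec (z - quant z)) ≤ ε ^ 2}) :
    ∀ (x : Fin n → ℝ) (xhat : Fin nhat → ℝ) (w : Fin p → ℝ)
      (what : Fin phat → ℝ) (νhat : Fin mhat → ℝ),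
      (x, xhat) ∈ Rx → (w, what) ∈ Rw →
      -- (1) outputs are ε-close
      ‖(WithLp.equiv 2 (Fin q → ℝ)).symm (C.mulVec x - (C * P).mulVec xhat)‖ ≤ ε ∧
      -- (2) under the interface function, the successor states remain in R_x
      -- with probability at least 1 - δ
      ENNReal.ofReal (1 - δ) ≤ μς {ς |
        let ν := K.mulVec (x - P.mulVec xhat) + Q.mulVec xhat + Rt.mulVec νhat +
          S.mulVec what + φ (f ⬝ᵥ x) • l₁ - φ (f ⬝ᵥ P.mulVec xhat) • l₂
        let x' := A.mulVec x + φ (f ⬝ᵥ x) • e + D.mulVec w + B.mulVec ν + R.mulVec ς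
        let xhat' := quant (Ah.mulVec xhat + φ (fh ⬝ᵥ xhat) • eh + Dh.mulVec what +
          Bh.mulVec νhat + Rh.mulVec ς)
        (x', xhat') ∈ Rx} := by
  intro x xhat w what νhat hx hw
  have hxq : (x - P.mulVec xhat) ⬝ᵥ M.mulVec (x - P.mulVec xhat) ≤ ε ^ 2 := by
    rw [hRx] at hx; exact hx
  constructor
  · -- output closeness
    have hCP : C.mulVec x - (C * P).mulVec xhat = C.mulVec (x - P.mulVec xhat) := by
      rw [Matrix.mulVec_sub, Matrix.mulVec_mulVec]
    have hquad : C.mulVec (x - P.mulVec xhat) ⬝ᵥ C.mulVec (x - P.mulVec xhat)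
        = (x - P.mulVec xhat) ⬝ᵥ (Cᵀ * C).mulVec (x - P.mulVec xhat) := by
      rw [Matrix.dotProduct_mulVec, ← Matrix.mulVec_mulVec, Matrix.dotProduct_mulVec,
        Matrix.vecMul_transpose, ← Matrix.dotProduct_mulVec]
    have hpsd : 0 ≤ (x - P.mulVec xhat) ⬝ᵥ (M - Cᵀ * C).mulVec (x - P.mulVec xhat) := by
      have := hM.dotProduct_mulVec_nonneg (x - P.mulVec xhat); simpa using this
    have hsplit : (x - P.mulVec xhat) ⬝ᵥ (M - Cᵀ * C).mulVec (x - P.mulVec xhat)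
        = (x - P.mulVec xhat) ⬝ᵥ M.mulVec (x - P.mulVec xhat)
          - (x - P.mulVec xhat) ⬝ᵥ (Cᵀ * C).mulVec (x - P.mulVec xhat) := by
      rw [Matrix.sub_mulVec, dotProduct_sub]
    have hle : C.mulVec (x - P.mulVec xhat) ⬝ᵥ C.mulVec (x - P.mulVec xhat) ≤ ε ^ 2 := by
      rw [hquad]; linarith
    rw [hCP, EuclideanSpace.norm_eq]
    simp only [Real.norm_eq_abs]
    have hsum : (∑ i, |((WithLp.equiv 2 (Fin q → ℝ)).symm
        (C.mulVec (x - P.mulVec xhat))) i| ^ 2)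
        = C.mulVec (x - P.mulVec xhat) ⬝ᵥ C.mulVec (x - P.mulVec xhat) := by
      simp [dotProduct, sq_abs, pow_two]
    rw [hsum]
    calc Real.sqrt (C.mulVec (x - P.mulVec xhat) ⬝ᵥ C.mulVec (x - P.mulVec xhat))
        ≤ Real.sqrt (ε ^ 2) := Real.sqrt_le_sqrt hle
      _ = ε := by rw [Real.sqrt_sq hε]
  · -- probabilistic closeness of successor states
    have hfΔ : f ⬝ᵥ (x - P.mulVec xhat) = f ⬝ᵥ x - f ⬝ᵥ P.mulVec xhat :=
      dotProduct_sub f x (P.mulVec xhat)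
    by_cases hcase : f ⬝ᵥ x = f ⬝ᵥ P.mulVec xhat
    case pos =>
      refine main_aux A B D R P Pw K Q S Rt Ah Bh Dh Rh M e f l₁ l₂ eh fh φ quant ε δ b
        μς Rx hRx hF hE hA hD Rw hchance x xhat w what νhat hx hw 0 ⟨le_refl 0, hb.le⟩ ?_
      rw [hfΔ, hcase]; simp [hcase]
    case neg =>
      refine main_aux A B D R P Pw K Q S Rt Ah Bh Dh Rh M e f l₁ l₂ eh fh φ quant ε δ b
        μς Rx hRx hF hE hA hD Rw hchance x xhat w what νhat hx hw
        ((φ (f ⬝ᵥ x) - φ (f ⬝ᵥ P.mulVec xhat)) / (f ⬝ᵥ x - f ⬝ᵥ P.mulVec xhat))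
        ⟨(hφ _ _ hcase).1, (hφ _ _ hcase).2⟩ ?_
      rw [hfΔ, div_mul_cancel₀ _ (sub_ne_zero.mpr hcase)]
end

section
/- Let X and X̂ be measurable spaces, q ∈ ℕ, and h : X → EuclideanSpace ℝ (Fin q), ĥ : X̂ → EuclideanSpace ℝ (Fin q) measurable output maps. Let R ⊆ X × X̂ be a measurable set, ε ≥ 0 and δ ∈ [0,1], such that ‖h x − ĥ x̂‖ ≤ ε for all (x, x̂) ∈ R. Let L₀ be a probability measure on X × X̂ with L₀(R) ≥ 1 − δ, and let κ be a Markov kernel from X × X̂ to X × X̂ with κ s (R) ≥ 1 − δ for all s ∈ R. Let ℙ be the law of the time-homogeneous Markov chain (s(k))_{k∈ℕ} on X × X̂ with initial distribution L₀ and transition kernel κ, and for T ∈ ℕ define the output trajectories Y, Ŷ : (ℕ → X × X̂) → (Fin (T+1) → EuclideanSpace ℝ (Fin q)) by Y ω k := h (ω k).1 and Ŷ ω k := ĥ (ω k).2. Then, with γ := 1 − (1 − δ)^{T+1}, for every set A ⊆ (Fin (T+1) → EuclideanSpace ℝ (Fin q)) such that A, A^ε and A^{−ε} are measurable: ℙ{ω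 | Ŷ ω ∈ A^{−ε}} − γ ≤ ℙ{ω | Y ω ∈ A} ≤ ℙ{ω | Ŷ ω ∈ A^ε} + γ. -/
open MeasureTheory ProbabilityTheory
open scoped ENNReal

/-- The finite-horizon law of the time-homogeneous Markov chain with initial
distribution `μ` and transition kernel `κ`, obtained by iterated
composition-products `μ ⊗ₘ κ ⊗ₘ ⋯`. -/
noncomputable def markovChainLaw {S : Type*} [MeasurableSpace S]
    (μ : Measure S) (κ : Kernel S S) : (T : ℕ) → Measure (Fin (T + 1) → S)
  | 0 => μ.map (fun s _ => s)
  | T + 1 =>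
      ((markovChainLaw μ κ T) ⊗ₘ
        (κ.comap (fun ω => ω (Fin.last T)) (measurable_pi_apply _))).map
        (fun s => Fin.snoc s.1 s.2)

/-- The `ε`-contraction `A^{-ε}` of a set of output trajectories. -/
def epsContraction {T q : ℕ} (A : Set (Fin (T + 1) → EuclideanSpace ℝ (Fin q)))
    (ε : ℝ) : Set (Fin (T + 1) → EuclideanSpace ℝ (Fin q)) :=
  {y ∈ A | ∀ ybar, (∀ k, ‖ybar k - y k‖ ≤ ε) → ybar ∈ A}

lemma measurableSet_allMem {S : Type*} [MeasurableSpace S] {n : ℕ}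
    {R : Set S} (hR : MeasurableSet R) :
    MeasurableSet {ω : Fin n → S | ∀ k, ω k ∈ R} := by
  have : {ω : Fin n → S | ∀ k, ω k ∈ R} = Set.univ.pi fun _ => R := by
    ext ω; simp
  rw [this]
  exact MeasurableSet.pi Set.countable_univ fun k _ => hR

lemma measurable_snoc' {S : Type*} [MeasurableSpace S] (T : ℕ) :
    Measurable (fun s : (Fin (T + 1) → S) × S => (Fin.snoc s.1 s.2 : Fin (T + 2) → S)) := by
  apply measurable_pi_lambda
  intro k
  refine Fin.lastCases ?_ ?_ k
  · simpa [Fin.snoc_last] using measurable_snd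
  · intro i
    simpa [Fin.snoc_castSucc, Function.comp_def] using (measurable_pi_apply i).comp measurable_fst

instance markovChainLaw_isProb {S : Type*} [MeasurableSpace S]
    (μ : Measure S) [IsProbabilityMeasure μ] (κ : Kernel S S) [IsMarkovKernel κ] (T : ℕ) :
    IsProbabilityMeasure (markovChainLaw μ κ T) := by
  induction T with
  | zero =>
      rw [markovChainLaw]
      exact Measure.isProbabilityMeasure_map
        (measurable_pi_lambda _ fun _ => measurable_id).aemeasurable
  | succ T ih =>
      rw [markovChainLaw]
      exact Measure.isProbabilityMeasure_map (measurable_snoc' T).aemeasurable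

lemma markovChainLaw_stays {S : Type*} [MeasurableSpace S]
    (μ : Measure S) [IsProbabilityMeasure μ] (κ : Kernel S S) [IsMarkovKernel κ]
    (R : Set S) (hR : MeasurableSet R) (c : ℝ≥0∞)
    (hμ : c ≤ μ R) (hκ : ∀ s ∈ R, c ≤ κ s R) (T : ℕ) :
    c ^ (T + 1) ≤ markovChainLaw μ κ T {ω | ∀ k, ω k ∈ R} := by
  induction T with
  | zero =>
      have hm : Measurable (fun (s : S) (_ : Fin 1) => s) :=
        measurable_pi_lambda _ fun _ => measurable_id
      rw [markovChainLaw, Measure.map_apply hm (measurableSet_allMem hR)]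
      have : (fun (s : S) (_ : Fin 1) => s) ⁻¹' {ω | ∀ k, ω k ∈ R} = R := by
        ext s; simp [Set.mem_preimage]
      rw [this, pow_one]; exact hμ
  | succ T ih =>
      rw [markovChainLaw]
      set κ' := κ.comap (fun ω : Fin (T + 1) → S => ω (Fin.last T)) (measurable_pi_apply _)
      have hGT : MeasurableSet {ω : Fin (T + 1) → S | ∀ k, ω k ∈ R} :=
        measurableSet_allMem hR
      have hGT1 : MeasurableSet {ω : Fin (T + 2) → S | ∀ k, ω k ∈ R} :=
        measurableSet_allMem hR
      rw [Measure.map_apply (measurable_snoc' T) hGT1]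
      have hpre : (fun s : (Fin (T + 1) → S) × S => (Fin.snoc s.1 s.2 : Fin (T + 2) → S)) ⁻¹'
          {ω | ∀ k, ω k ∈ R} = {ω : Fin (T + 1) → S | ∀ k, ω k ∈ R} ×ˢ R := by
        ext p
        simp only [Set.mem_preimage, Set.mem_setOf_eq, Set.mem_prod]
        constructor
        · intro hp
          refine ⟨fun k => ?_, ?_⟩
          · have := hp k.castSucc; rwa [Fin.snoc_castSucc] at this
          · have := hp (Fin.last (T + 1)); rwa [Fin.snoc_last] at this
        · rintro ⟨h1, h2⟩ k
          refine Fin.lastCases ?_ ?_ k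
          · rwa [Fin.snoc_last]
          · intro i; rw [Fin.snoc_castSucc]; exact h1 i
      rw [hpre, Measure.compProd_apply_prod hGT hR]
      calc c ^ (T + 1 + 1) = c * c ^ (T + 1) := by ring
        _ ≤ c * markovChainLaw μ κ T {ω | ∀ k, ω k ∈ R} := by
            exact mul_le_mul_right ih c
        _ = ∫⁻ _ in {ω : Fin (T + 1) → S | ∀ k, ω k ∈ R}, c ∂(markovChainLaw μ κ T) := by
            rw [setLIntegral_const, mul_comm]
        _ ≤ _ := by
            refine setLIntegral_mono' hGT fun ω hω => ?_
            exact hκ (ω (Fin.last T)) (hω (Fin.last T))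

/-- Theorem 3.4 (closeness), in coupling form: if the lifted chain on `X × X̂`
starts in the relation `R` with probability at least `1 - δ` and stays in `R` at
each step with probability at least `1 - δ`, and outputs of related states are
`ε`-close, then the output trajectories of the two systems satisfy
`ℙ{Ŷ ∈ A^{-ε}} - γ ≤ ℙ{Y ∈ A} ≤ ℙ{Ŷ ∈ A^ε} + γ` with `γ = 1 - (1 - δ)^(T+1)`. -/
theorem closeness_theorem {X Xhat : Type*} [MeasurableSpace X] [MeasurableSpace Xhat]
    {q : ℕ} (h : X → EuclideanSpace ℝ (Fin q)) (hh : Measurable h)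
    (hhat : Xhat → EuclideanSpace ℝ (Fin q)) (hhhat : Measurable hhat)
    (R : Set (X × Xhat)) (hRmeas : MeasurableSet R)
    (ε δ : ℝ) (hε : 0 ≤ ε) (hδ0 : 0 ≤ δ) (hδ1 : δ ≤ 1)
    (houtput : ∀ s ∈ R, ‖h s.1 - hhat s.2‖ ≤ ε)
    (L₀ : Measure (X × Xhat)) [IsProbabilityMeasure L₀]
    (hL₀ : ENNReal.ofReal (1 - δ) ≤ L₀ R)
    (κ : Kernel (X × Xhat) (X × Xhat)) [IsMarkovKernel κ]
    (hκ : ∀ s ∈ R, ENNReal.ofReal (1 - δ) ≤ κ s R)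
    (T : ℕ)
    (Y Yhat : (Fin (T + 1) → X × Xhat) → (Fin (T + 1) → EuclideanSpace ℝ (Fin q)))
    (hY : Y = fun ω k => h (ω k).1) (hYhat : Yhat = fun ω k => hhat (ω k).2)
    (γ : ℝ) (hγ : γ = 1 - (1 - δ) ^ (T + 1))
    (A : Set (Fin (T + 1) → EuclideanSpace ℝ (Fin q)))
    (hA : MeasurableSet A) (hAe : MeasurableSet (epsExpansion A ε))
    (hAc : MeasurableSet (epsContraction A ε)) :
    (markovChainLaw L₀ κ T {ω | Yhat ω ∈ epsContraction A ε}).toReal - γ ≤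
        (markovChainLaw L₀ κ T {ω | Y ω ∈ A}).toReal ∧
      (markovChainLaw L₀ κ T {ω | Y ω ∈ A}).toReal ≤
        (markovChainLaw L₀ κ T {ω | Yhat ω ∈ epsExpansion A ε}).toReal + γ := by
  set P := markovChainLaw L₀ κ T with hP
  haveI : IsProbabilityMeasure P := markovChainLaw_isProb L₀ κ T
  set G : Set (Fin (T + 1) → X × Xhat) := {ω | ∀ k, ω k ∈ R} with hGdef
  have hGmeas : MeasurableSet G := measurableSet_allMem hRmeas
  have hclose : ∀ ω ∈ G, ∀ k, ‖Y ω k - Yhat ω k‖ ≤ ε := by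
    intro ω hω k
    rw [hY, hYhat]
    exact houtput _ (hω k)
  -- stays in R
  have hstay : ENNReal.ofReal ((1 - δ) ^ (T + 1)) ≤ P G := by
    rw [ENNReal.ofReal_pow (by linarith)]
    exact markovChainLaw_stays L₀ κ R hRmeas _ hL₀ hκ T
  have hne : ∀ s : Set (Fin (T + 1) → X × Xhat), P s ≠ ⊤ := fun s => measure_ne_top P s
  have hGc : (P Gᶜ).toReal ≤ γ := by
    have h1 : (P G).toReal + (P Gᶜ).toReal = 1 := by
      rw [← ENNReal.toReal_add (hne _) (hne _), measure_add_measure_compl hGmeas]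
      simp
    have h2 : (1 - δ) ^ (T + 1) ≤ (P G).toReal := by
      rw [← ENNReal.ofReal_le_iff_le_toReal (hne _)] at *
      exact hstay
    rw [hγ]; linarith
  -- generic bound
  have key : ∀ B C : Set (Fin (T + 1) → X × Xhat), MeasurableSet B → MeasurableSet C →
      B ∩ G ⊆ C → (P B).toReal ≤ (P C).toReal + γ := by
    intro B C hB hC hBC
    have : P B ≤ P C + P Gᶜ := by
      calc P B ≤ P ((B ∩ G) ∪ Gᶜ) := by
            apply measure_mono
            intro x hx
            by_cases hxG : x ∈ G
            · exact Or.inl ⟨hx, hxG⟩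
            · exact Or.inr hxG
        _ ≤ P (B ∩ G) + P Gᶜ := measure_union_le _ _
        _ ≤ P C + P Gᶜ := add_le_add_left (measure_mono hBC) _
    have := ENNReal.toReal_mono (by simp [ENNReal.add_ne_top, hne]) this
    rw [ENNReal.toReal_add (hne _) (hne _)] at this
    linarith
  have hYmeas : Measurable Y := by
    rw [hY]
    exact measurable_pi_lambda _ fun k => hh.comp ((measurable_pi_apply k).fst)
  have hYhatmeas : Measurable Yhat := by
    rw [hYhat]
    exact measurable_pi_lambda _ fun k => hhhat.comp ((measurable_pi_apply k).snd)
  constructor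
  · have := key {ω | Yhat ω ∈ epsContraction A ε} {ω | Y ω ∈ A}
      (hYhatmeas hAc) (hYmeas hA)
      (by
        rintro ω ⟨hωc, hωG⟩
        exact hωc.2 (Y ω) fun k => hclose ω hωG k)
    linarith
  · exact key {ω | Y ω ∈ A} {ω | Yhat ω ∈ epsExpansion A ε}
      (hYmeas hA) (hYhatmeas hAe)
      (by
        rintro ω ⟨hωA, hωG⟩
        exact ⟨Y ω, hωA, fun k => hclose ω hωG k⟩)
end
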